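/- Under hypotheses (A1) and (A2), for every u ∈ S^{d-1} ∩ C and k ∈ ℤ^d ∩ C, there is a neighborhood V_u of r(u) = (e^{α_1(u)},…,e^{α_d(u)}) in ℝ^d such that the series F_k(x) = Σ_{m∈ℤ^d∖C} P_k(Z(τ)=m, τ<∞) x^m converges absolutely for all x ∈ ℂ^d with (|x_1|,…,|x_d|) ∈ V_u; hence F_k extends analytically to this multicircular set. -/

import Mathlib

open scoped BigOperators RealInnerProductSpace
open Filter MeasureTheory Classical

attribute [local instance] Classical.propDecidable

noncomputable section

abbrev V (d : ℕ) := EuclideanSpace ℝ (Fin d)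
abbrev Zd (d : ℕ) := Fin d → ℤ

/-- Embedding of lattice points into ℝ^d. -/
def toV {d : ℕ} (m : Zd d) : V d := WithLp.toLp 2 (fun i => (m i : ℝ))

/-- Scalar product α·m of a real vector with a lattice point. -/
def dotZ {d : ℕ} (α : V d) (m : Zd d) : ℝ := ∑ i, α i * (m i : ℝ)

/-- n-step transition probability P_0(Z(n) = m) of the homogeneous walk with step law μ. -/
def stepProb {d : ℕ} (μ : Zd d → ℝ) : ℕ → Zd d → ℝ
  | 0 => fun m => if m = 0 then 1 else 0
  | n + 1 => fun m => ∑' j : Zd d, stepProb μ n j * μ (m - j)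

/-- P_k(Z(n) = m, τ > n) for the walk killed at the first exit from C. -/
def killedProb {d : ℕ} (μ : Zd d → ℝ) (C : Set (V d)) (k : Zd d) : ℕ → Zd d → ℝ
  | 0 => fun m => if m = k ∧ toV m ∈ C then 1 else 0
  | n + 1 => fun m =>
      if toV m ∈ C then ∑' j : Zd d, killedProb μ C k n j * μ (m - j) else 0

/-- P_k(Z(τ) = m, τ = n). -/
def exitProb {d : ℕ} (μ : Zd d → ℝ) (C : Set (V d)) (k : Zd d) : ℕ → Zd d → ℝ
  | 0 => fun m => if m = k ∧ toV m ∉ C then 1 else 0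
  | n + 1 => fun m =>
      if toV m ∉ C then ∑' j : Zd d, killedProb μ C k n j * μ (m - j) else 0

/-- P_k(Z(τ) = m, τ < ∞). -/
def exitTotal {d : ℕ} (μ : Zd d → ℝ) (C : Set (V d)) (k m : Zd d) : ℝ :=
  ∑' n : ℕ, exitProb μ C k n m

/-- Green function G_C(k,m) of the walk killed at the exit from C. -/
def GreenC {d : ℕ} (μ : Zd d → ℝ) (C : Set (V d)) (k m : Zd d) : ℝ :=
  ∑' n : ℕ, killedProb μ C k n m

/-- Green function of the free walk. -/
def Green {d : ℕ} (μ : Zd d → ℝ) (k m : Zd d) : ℝ :=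
  ∑' n : ℕ, stepProb μ n (m - k)

/-- Monomial x^m = x₁^{m₁}⋯x_d^{m_d} for x ∈ ℂ^d, m ∈ ℤ^d. -/
def cpow {d : ℕ} (x : Fin d → ℂ) (m : Zd d) : ℂ := ∏ i, x i ^ (m i)

/-- Monomial r^m for r ∈ ℝ^d, m ∈ ℤ^d. -/
def rpowZ {d : ℕ} (r : Fin d → ℝ) (m : Zd d) : ℝ := ∏ i, r i ^ (m i)

/-- Multivariate generating function 𝒫(x) = Σ_k μ(k) x^k. -/
def calP {d : ℕ} (μ : Zd d → ℝ) (x : Fin d → ℂ) : ℂ := ∑' k : Zd d, (μ k : ℂ) * cpow x k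

/-- Real version of the generating function on (0,∞)^d. -/
def calPR {d : ℕ} (μ : Zd d → ℝ) (r : Fin d → ℝ) : ℝ := ∑' k : Zd d, μ k * rpowZ r k

/-- Jump generating function P(α) = Σ_k e^{α·k} μ(k). -/
def Pgen {d : ℕ} (μ : Zd d → ℝ) (α : V d) : ℝ := ∑' k : Zd d, μ k * Real.exp (dotZ α k)

/-- The set D = {α : P(α) ≤ 1}. -/
def Dset {d : ℕ} (μ : Zd d → ℝ) : Set (V d) := {α | Pgen μ α ≤ 1}

/-- μ is a probability measure on ℤ^d. -/
def IsProb {d : ℕ} (μ : Zd d → ℝ) : Prop := (∀ k, 0 ≤ μ k) ∧ HasSum μ 1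

/-- Irreducibility of the walk in ℤ^d: every point is reachable from 0. -/
def IrreducibleWalk {d : ℕ} (μ : Zd d → ℝ) : Prop := ∀ m : Zd d, ∃ n, 0 < stepProb μ n m

/-- P is finite on a neighborhood of D. -/
def FiniteNearD {d : ℕ} (μ : Zd d → ℝ) : Prop :=
  ∃ U : Set (V d), IsOpen U ∧ Dset μ ⊆ U ∧
    ∀ α ∈ U, Summable (fun k : Zd d => μ k * Real.exp (dotZ α k))

/-- The mean jump Σ_k k μ(k) is nonzero. -/
def NonzeroMean {d : ℕ} (μ : Zd d → ℝ) : Prop :=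
  ∃ i : Fin d, (∑' k : Zd d, (k i : ℝ) * μ k) ≠ 0

/-- Hypotheses (A1). -/
def A1 {d : ℕ} (μ : Zd d → ℝ) : Prop :=
  IsProb μ ∧ IrreducibleWalk μ ∧ FiniteNearD μ ∧ NonzeroMean μ

/-- C is an open cone with vertex 0. -/
def IsOpenCone {d : ℕ} (C : Set (V d)) : Prop :=
  IsOpen C ∧ ∀ x ∈ C, ∀ c : ℝ, 0 < c → c • x ∈ C

/-- Hypothesis (A2): irreducibility of the killed walk on ℤ^d ∩ C. -/
def A2 {d : ℕ} (μ : Zd d → ℝ) (C : Set (V d)) : Prop :=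
  ∀ k m : Zd d, toV k ∈ C → toV m ∈ C → ∃ n, 0 < killedProb μ C k n m

/-- The harmonic function h_α(k) = e^{α·k} − E_k(e^{α·Z(τ)}; τ<∞). -/
def hFun {d : ℕ} (μ : Zd d → ℝ) (C : Set (V d)) (α : V d) (k : Zd d) : ℝ :=
  Real.exp (dotZ α k) - ∑' m : Zd d, exitTotal μ C k m * Real.exp (dotZ α m)

/-- α ↦ α·u attains its maximum over D at αu. -/
def IsMaxOn' {d : ℕ} (μ : Zd d → ℝ) (u αu : V d) : Prop :=
  αu ∈ Dset μ ∧ ∀ β ∈ Dset μ, ⟪β, u⟫ ≤ ⟪αu, u⟫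

/-- The generating function H_k(x) = Σ_{m ∈ ℤ^d∩C} G_C(k,m) x^m. -/
def Hfun {d : ℕ} (μ : Zd d → ℝ) (C : Set (V d)) (k : Zd d) (x : Fin d → ℂ) : ℂ :=
  ∑' m : Zd d, if toV m ∈ C then (GreenC μ C k m : ℂ) * cpow x m else 0

/-- The generating function F_k(x) = Σ_{m ∈ ℤ^d∖C} P_k(Z(τ)=m, τ<∞) x^m. -/
def Ffun {d : ℕ} (μ : Zd d → ℝ) (C : Set (V d)) (k : Zd d) (x : Fin d → ℂ) : ℂ :=
  ∑' m : Zd d, if toV m ∉ C then (exitTotal μ C k m : ℂ) * cpow x m else 0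


/-!
For `β ∈ D` the process `e^{β·Z(n ∧ τ)}` is a supermartingale, so
`P_k(Z(τ) = m, τ < ∞) e^{β·m} ≤ e^{β·k}` for every `m`. For an exit point `m` take
`β = α(m/|m|)`, the point of `D` farthest in the direction of `m`. As `P` is convex,
differentiable, and not minimal at `0` (nonzero drift), `∂D` is smooth and `α(u)` maximizes
`⟪·, v⟫` over `D` only for `v = u`; by compactness of the unit directions outside the open cone
`C` this gives `β·m ≥ α(u)·m + δ|m|`. So at `|x_i| = e^{γ_i}` with `γ` within `δ/2` of `α(u)`,
the terms of `F_k` are `O(e^{-δ|m|/2})`, which is summable over `ℤ^d`.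
-/

section LatticeVectors

variable {d : ℕ}

lemma dotZ_eq_inner (β : V d) (m : Zd d) : dotZ β m = ⟪β, toV m⟫ := by
  simp [dotZ, toV, PiLp.inner_apply, mul_comm]

lemma dotZ_sub_right (β : V d) (m j : Zd d) : dotZ β (m - j) = dotZ β m - dotZ β j := by
  simp [dotZ, mul_sub, Finset.sum_sub_distrib]

lemma dotZ_single (i : Fin d) (m : Zd d) : dotZ (EuclideanSpace.single i 1) m = m i := by
  simp [dotZ]

lemma norm_le_sum_abs (y : V d) : ‖y‖ ≤ ∑ i, |y i| := by
  rw [EuclideanSpace.norm_eq, Real.sqrt_le_left (Finset.sum_nonneg fun i _ => abs_nonneg _)]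
  simpa using Finset.sum_sq_le_sq_sum_of_nonneg (s := Finset.univ) (fun i _ => abs_nonneg (y i))

def l1Norm (m : Zd d) : ℝ := ∑ i, |(m i : ℝ)|

lemma norm_toV_le_l1Norm (m : Zd d) : ‖toV m‖ ≤ l1Norm m := by
  simpa [toV, l1Norm] using norm_le_sum_abs (toV m)

lemma l1Norm_le_mul_norm_toV (m : Zd d) : l1Norm m ≤ d * ‖toV m‖ := by
  calc l1Norm m ≤ ∑ _i : Fin d, ‖toV m‖ :=
        Finset.sum_le_sum fun i _ => by simpa [toV] using PiLp.norm_apply_le (toV m) i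
    _ = d * ‖toV m‖ := by simp

lemma dotZ_le_mul_l1Norm {y : V d} {c : ℝ} (hy : ∀ i, |y i| ≤ c) (m : Zd d) :
    dotZ y m ≤ c * l1Norm m := by
  rw [l1Norm, Finset.mul_sum]
  refine Finset.sum_le_sum fun i _ => ?_
  calc y i * m i ≤ |y i| * |(m i : ℝ)| := by rw [← abs_mul]; exact le_abs_self _
    _ ≤ c * |(m i : ℝ)| := mul_le_mul_of_nonneg_right (hy i) (abs_nonneg _)

def signVec (t : Finset (Fin d)) : V d := WithLp.toLp 2 fun i => if i ∈ t then 1 else -1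

lemma exists_dotZ_signVec_eq_l1Norm (m : Zd d) : ∃ t, dotZ (signVec t) m = l1Norm m :=
  ⟨Finset.univ.filter fun i => 0 ≤ m i, Finset.sum_congr rfl fun i _ => by
    by_cases h : 0 ≤ m i
    · simp [signVec, h, abs_of_nonneg (Int.cast_nonneg_iff.mpr h)]
    · simp [signVec, h, abs_of_neg (Int.cast_lt_zero.2 (not_le.1 h))]⟩

lemma summable_fin_prod {α : Type*} {g : α → ℝ} (hg0 : ∀ a, 0 ≤ g a) (hg : Summable g) :
    ∀ n : ℕ, Summable fun m : Fin n → α => ∏ i, g (m i)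
  | 0 => .of_finite
  | n + 1 => by
    have hprod : Summable fun p : α × (Fin n → α) => g p.1 * ∏ i, g (p.2 i) :=
      Summable.mul_of_nonneg (f := g) (g := fun m : Fin n → α => ∏ i, g (m i)) hg
        (summable_fin_prod hg0 hg n) hg0 fun m => Finset.prod_nonneg fun i _ => hg0 _
    refine ((Fin.consEquiv fun _ => α).symm.summable_iff.2 hprod).congr fun m => ?_
    simp [Fin.consEquiv, Fin.prod_univ_succ, Fin.tail]

lemma summable_exp_neg_mul_abs {c : ℝ} (hc : 0 < c) :
    Summable fun z : ℤ => Real.exp (-c * |(z : ℝ)|) := by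
  have hgeom : Summable fun n : ℕ => Real.exp (-c) ^ n :=
    summable_geometric_of_lt_one (Real.exp_nonneg _) (Real.exp_lt_one_iff.2 (neg_lt_zero.2 hc))
  refine .of_nat_of_neg (hgeom.congr fun n => ?_) (hgeom.congr fun n => ?_) <;>
    simp [← Real.exp_nat_mul, mul_comm]

lemma summable_exp_neg_mul_l1Norm {c : ℝ} (hc : 0 < c) :
    Summable fun m : Zd d => Real.exp (-c * l1Norm m) := by
  refine (summable_fin_prod (fun _ => Real.exp_nonneg _) (summable_exp_neg_mul_abs hc) d).congr
    fun m => ?_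
  rw [l1Norm, Finset.mul_sum, Real.exp_sum]

lemma rpowZ_eq_exp_dotZ {r : Fin d → ℝ} (hr : ∀ i, 0 < r i) (m : Zd d) :
    rpowZ r m = Real.exp (dotZ (WithLp.toLp 2 fun i => Real.log (r i)) m) := by
  rw [rpowZ, dotZ, Real.exp_sum]
  refine Finset.prod_congr rfl fun i _ => ?_
  rw [← Real.rpow_intCast, Real.rpow_def_of_pos (hr i), mul_comm]

end LatticeVectors

open scoped ENNReal Topology

lemma summable_of_tsum_ofReal_ne_top {ι : Type*} {f : ι → ℝ} (hf : ∀ i, 0 ≤ f i)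
    (h : ∑' i, ENNReal.ofReal (f i) ≠ ⊤) : Summable f :=
  (ENNReal.summable_toReal h).congr fun i => ENNReal.toReal_ofReal (hf i)

section KilledWalk

variable {d : ℕ} {μ : Zd d → ℝ} {C : Set (V d)} {k : Zd d}

lemma IsProb.le_one (hμ : IsProb μ) (j : Zd d) : μ j ≤ 1 := by
  simpa [hμ.2.tsum_eq] using hμ.2.summable.le_tsum j fun i _ => hμ.1 i

lemma killedProb_nonneg (hμ : ∀ j, 0 ≤ μ j) : ∀ n m, 0 ≤ killedProb μ C k n m
  | 0, m => by simp only [killedProb]; split <;> norm_num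
  | n + 1, m => by
    simp only [killedProb]
    split
    · exact tsum_nonneg fun j => mul_nonneg (killedProb_nonneg hμ n j) (hμ _)
    · exact le_rfl

lemma exitProb_nonneg (hμ : ∀ j, 0 ≤ μ j) : ∀ n m, 0 ≤ exitProb μ C k n m
  | 0, m => by simp only [exitProb]; split <;> norm_num
  | n + 1, m => by
    simp only [exitProb]
    split
    · exact tsum_nonneg fun j => mul_nonneg (killedProb_nonneg hμ n j) (hμ _)
    · exact le_rfl

lemma exitTotal_nonneg (hμ : ∀ j, 0 ≤ μ j) (m : Zd d) : 0 ≤ exitTotal μ C k m :=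
  tsum_nonneg fun n => exitProb_nonneg hμ n m

variable (μ C k) in
/-- `E_k[e^{β·Z(n)}; τ > n]`. -/
def killedExpMoment (β : V d) (n : ℕ) : ℝ≥0∞ :=
  ∑' m, ENNReal.ofReal (killedProb μ C k n m * Real.exp (dotZ β m))

variable (μ C k) in
/-- `E_k[e^{β·Z(τ)}; τ = n]`. -/
def exitExpMoment (β : V d) (n : ℕ) : ℝ≥0∞ :=
  ∑' m, ENNReal.ofReal (exitProb μ C k n m * Real.exp (dotZ β m))

lemma killedExpMoment_zero_add_exitExpMoment_zero (β : V d) :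
    killedExpMoment μ C k β 0 + exitExpMoment μ C k β 0
      = ENNReal.ofReal (Real.exp (dotZ β k)) := by
  rw [killedExpMoment, exitExpMoment, ← ENNReal.tsum_add,
    ← tsum_ite_eq k fun m => ENNReal.ofReal (Real.exp (dotZ β m))]
  refine tsum_congr fun m => ?_
  by_cases hm : m = k
  · subst hm
    by_cases hC : toV m ∈ C <;> simp [killedProb, exitProb, hC]
  · simp [killedProb, exitProb, hm]

/-- At time `n + 1` the walk is either still in `C` or has just exited. -/
lemma killedExpMoment_succ_add_exitExpMoment_succ (hμ : IsProb μ) {β : V d}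
    (hβ : Summable fun j => μ j * Real.exp (dotZ β j)) {n : ℕ}
    (hn : Summable (killedProb μ C k n)) :
    killedExpMoment μ C k β (n + 1) + exitExpMoment μ C k β (n + 1)
      = killedExpMoment μ C k β n * ENNReal.ofReal (Pgen μ β) := by
  set a : Zd d → ℝ≥0∞ := fun j => ENNReal.ofReal (killedProb μ C k n j * Real.exp (dotZ β j))
  set b : Zd d → ℝ≥0∞ := fun s => ENNReal.ofReal (μ s * Real.exp (dotZ β s))
  have hb : ∀ j, ∑' m, b (m - j) = ENNReal.ofReal (Pgen μ β) := fun j => by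
    rw [show ∑' m, b (m - j) = ∑' s, b s from (Equiv.subRight j).tsum_eq b, Pgen,
      ENNReal.ofReal_tsum_of_nonneg (fun s => mul_nonneg (hμ.1 s) (Real.exp_nonneg _)) hβ]
  have hstep : ∀ m, ENNReal.ofReal (killedProb μ C k (n + 1) m * Real.exp (dotZ β m))
      + ENNReal.ofReal (exitProb μ C k (n + 1) m * Real.exp (dotZ β m))
      = ∑' j, a j * b (m - j) := fun m => by
    have hconv : ENNReal.ofReal
        ((∑' j, killedProb μ C k n j * μ (m - j)) * Real.exp (dotZ β m))
          = ∑' j, a j * b (m - j) := by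
      rw [← tsum_mul_right, ENNReal.ofReal_tsum_of_nonneg]
      · refine tsum_congr fun j => ?_
        rw [← ENNReal.ofReal_mul (mul_nonneg (killedProb_nonneg hμ.1 n j) (Real.exp_nonneg _)),
          dotZ_sub_right, Real.exp_sub]
        congr 1
        field_simp
      · exact fun j => mul_nonneg (mul_nonneg (killedProb_nonneg hμ.1 n j) (hμ.1 _))
          (Real.exp_nonneg _)
      · refine (Summable.of_nonneg_of_le (fun j => mul_nonneg (killedProb_nonneg hμ.1 n j)
          (hμ.1 _)) (fun j => ?_) hn).mul_right _
        exact mul_le_of_le_one_right (killedProb_nonneg hμ.1 n j) (hμ.le_one _)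
    by_cases hm : toV m ∈ C <;> simp [killedProb, exitProb, hm, hconv]
  calc killedExpMoment μ C k β (n + 1) + exitExpMoment μ C k β (n + 1)
      = ∑' m, ∑' j, a j * b (m - j) := by
        rw [killedExpMoment, exitExpMoment, ← ENNReal.tsum_add]
        exact tsum_congr hstep
    _ = ∑' j, a j * ∑' m, b (m - j) := by
        rw [ENNReal.tsum_comm]
        exact tsum_congr fun j => ENNReal.tsum_mul_left
    _ = killedExpMoment μ C k β n * ENNReal.ofReal (Pgen μ β) := by
        simp_rw [hb]
        exact ENNReal.tsum_mul_right

lemma summable_killedProb (hμ : IsProb μ) : ∀ n, Summable (killedProb μ C k n)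
  | 0 => summable_of_ne_finset_zero (s := {k}) fun m hm => by
      simp_all [killedProb]
  | n + 1 => by
    have hn := summable_killedProb hμ n
    have hsum : Summable fun j => μ j * Real.exp (dotZ 0 j) := by
      simpa [dotZ] using hμ.2.summable
    have hlt : killedExpMoment μ C k 0 n ≠ ⊤ := by
      simp [killedExpMoment, dotZ, ← ENNReal.ofReal_tsum_of_nonneg
        (killedProb_nonneg hμ.1 n) hn]
    have hle : ∑' m, ENNReal.ofReal (killedProb μ C k (n + 1) m)
        ≤ killedExpMoment μ C k 0 n * ENNReal.ofReal (Pgen μ 0) := by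
      rw [← killedExpMoment_succ_add_exitExpMoment_succ hμ hsum hn]
      simp [killedExpMoment, dotZ]
    exact summable_of_tsum_ofReal_ne_top (killedProb_nonneg hμ.1 _)
      (ne_top_of_le_ne_top (ENNReal.mul_ne_top hlt ENNReal.ofReal_ne_top) hle)

lemma tsum_exitExpMoment_le (hμ : IsProb μ) {β : V d}
    (hβ : Summable fun j => μ j * Real.exp (dotZ β j)) (hP : Pgen μ β ≤ 1) :
    ∑' n, exitExpMoment μ C k β n ≤ ENNReal.ofReal (Real.exp (dotZ β k)) := by
  have hP' : ENNReal.ofReal (Pgen μ β) ≤ 1 := ENNReal.ofReal_le_one.2 hP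
  have htel : ∀ N, ∑ n ∈ Finset.range (N + 1), exitExpMoment μ C k β n
      + killedExpMoment μ C k β N ≤ ENNReal.ofReal (Real.exp (dotZ β k)) := by
    intro N
    induction N with
    | zero =>
      rw [zero_add, Finset.sum_range_one, add_comm, killedExpMoment_zero_add_exitExpMoment_zero]
    | succ N ih =>
      calc ∑ n ∈ Finset.range (N + 2), exitExpMoment μ C k β n
            + killedExpMoment μ C k β (N + 1)
          = ∑ n ∈ Finset.range (N + 1), exitExpMoment μ C k β n
            + (killedExpMoment μ C k β (N + 1) + exitExpMoment μ C k β (N + 1)) := by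
            rw [Finset.sum_range_succ]; ring
        _ = ∑ n ∈ Finset.range (N + 1), exitExpMoment μ C k β n
            + killedExpMoment μ C k β N * ENNReal.ofReal (Pgen μ β) := by
            rw [killedExpMoment_succ_add_exitExpMoment_succ hμ hβ (summable_killedProb hμ N)]
        _ ≤ _ := le_trans (by gcongr; exact mul_le_of_le_one_right' hP') ih
  refine ENNReal.tsum_le_of_sum_range_le fun N => le_trans ?_ (htel N)
  exact (Finset.sum_le_sum_of_subset (Finset.range_subset_range.2 N.le_succ)).trans le_self_add

lemma exitTotal_mul_exp_le (hμ : IsProb μ) {β : V d}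
    (hβ : Summable fun j => μ j * Real.exp (dotZ β j)) (hP : Pgen μ β ≤ 1) (m : Zd d) :
    exitTotal μ C k m * Real.exp (dotZ β m) ≤ Real.exp (dotZ β k) := by
  have hnn : ∀ n, 0 ≤ exitProb μ C k n m * Real.exp (dotZ β m) :=
    fun n => mul_nonneg (exitProb_nonneg hμ.1 n m) (Real.exp_nonneg _)
  have hle : ∑' n, ENNReal.ofReal (exitProb μ C k n m * Real.exp (dotZ β m))
      ≤ ENNReal.ofReal (Real.exp (dotZ β k)) :=
    (ENNReal.tsum_le_tsum fun n => ENNReal.le_tsum m).trans (tsum_exitExpMoment_le hμ hβ hP)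
  have hs := summable_of_tsum_ofReal_ne_top hnn (ne_top_of_le_ne_top ENNReal.ofReal_ne_top hle)
  rw [exitTotal, ← tsum_mul_right, ← ENNReal.ofReal_le_ofReal_iff (Real.exp_nonneg _),
    ENNReal.ofReal_tsum_of_nonneg hnn hs]
  exact hle

end KilledWalk

section JumpGeneratingFunction

variable {d : ℕ} {μ : Zd d → ℝ}

/-- A divergent series has the junk value `0 ≤ 1`, which puts its exponent into `D`; so
finiteness near `D` makes `P` finite everywhere. -/
lemma FiniteNearD.summable (h : FiniteNearD μ) (β : V d) :
    Summable fun j => μ j * Real.exp (dotZ β j) := by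
  by_contra hs
  obtain ⟨U, -, hDU, hU⟩ := h
  exact hs (hU β (hDU (by simp [Dset, Pgen, tsum_eq_zero_of_not_summable hs])))

lemma IsProb.Pgen_zero (hμ : IsProb μ) : Pgen μ 0 = 1 := by
  simpa [Pgen, dotZ] using hμ.2.tsum_eq

lemma convexOn_Pgen (hμ : ∀ j, 0 ≤ μ j)
    (hs : ∀ β, Summable fun j => μ j * Real.exp (dotZ β j)) :
    ConvexOn ℝ Set.univ (Pgen μ) := by
  refine ⟨convex_univ, fun x _ y _ a b ha hb hab => ?_⟩
  have hterm : ∀ j, μ j * Real.exp (dotZ (a • x + b • y) j)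
      ≤ a * (μ j * Real.exp (dotZ x j)) + b * (μ j * Real.exp (dotZ y j)) := fun j => by
    have := convexOn_exp.2 (Set.mem_univ (dotZ x j)) (Set.mem_univ (dotZ y j)) ha hb hab
    simp only [smul_eq_mul, dotZ_eq_inner, inner_add_left, real_inner_smul_left] at this ⊢
    nlinarith [hμ j]
  calc Pgen μ (a • x + b • y)
      ≤ ∑' j, (a * (μ j * Real.exp (dotZ x j)) + b * (μ j * Real.exp (dotZ y j))) :=
        (hs _).tsum_le_tsum hterm (((hs x).mul_left a).add ((hs y).mul_left b))
    _ = a • Pgen μ x + b • Pgen μ y := by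
        rw [((hs x).mul_left a).tsum_add ((hs y).mul_left b), tsum_mul_left, tsum_mul_left]
        rfl

lemma summable_mul_exp_mul_exp_l1Norm (hμ : ∀ j, 0 ≤ μ j)
    (hs : ∀ β, Summable fun j => μ j * Real.exp (dotZ β j))
    (β : V d) (c : ℝ) :
    Summable fun j => μ j * Real.exp (dotZ β j) * Real.exp (c * l1Norm j) := by
  refine .of_nonneg_of_le (fun j => mul_nonneg (mul_nonneg (hμ j) (Real.exp_nonneg _))
    (Real.exp_nonneg _)) (fun j => ?_)
    (summable_sum fun t (_ : t ∈ Finset.univ) => hs (β + c • signVec t))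
  obtain ⟨t, ht⟩ := exists_dotZ_signVec_eq_l1Norm j
  refine le_trans (le_of_eq ?_) (Finset.single_le_sum (f := fun t =>
    μ j * Real.exp (dotZ (β + c • signVec t) j))
    (fun t _ => mul_nonneg (hμ j) (Real.exp_nonneg _)) (Finset.mem_univ t))
  simp only [dotZ_eq_inner, inner_add_left, real_inner_smul_left, Real.exp_add] at ht ⊢
  rw [ht, mul_assoc]

lemma hasFDerivAt_Pgen (hμ : ∀ j, 0 ≤ μ j)
    (hs : ∀ β, Summable fun j => μ j * Real.exp (dotZ β j)) (β : V d) :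
    HasFDerivAt (Pgen μ) (∑' j, (μ j * Real.exp (dotZ β j)) • innerSL ℝ (toV j)) β := by
  have hderiv : ∀ j x, HasFDerivAt (fun y : V d => μ j * Real.exp (dotZ y j))
      ((μ j * Real.exp (dotZ x j)) • innerSL ℝ (toV j)) x := fun j x => by
    have := (((innerSL ℝ (toV j)).hasFDerivAt (x := x)).exp).const_mul (μ j)
    simpa [dotZ_eq_inner, real_inner_comm, smul_smul] using this
  have hbound : ∀ j, ∀ x ∈ Metric.ball β 1,
      ‖(μ j * Real.exp (dotZ x j)) • innerSL ℝ (toV j)‖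
        ≤ μ j * Real.exp (dotZ β j) * Real.exp (2 * l1Norm j) := fun j x hx => by
    have hN := norm_toV_le_l1Norm j
    have hx' : dotZ x j ≤ dotZ β j + l1Norm j := by
      have := real_inner_le_norm (x - β) (toV j)
      rw [inner_sub_left, ← dotZ_eq_inner, ← dotZ_eq_inner] at this
      nlinarith [mem_ball_iff_norm.1 hx, norm_nonneg (toV j), norm_nonneg (x - β)]
    rw [norm_smul, innerSL_apply_norm,
      Real.norm_of_nonneg (mul_nonneg (hμ j) (Real.exp_nonneg _))]
    calc μ j * Real.exp (dotZ x j) * ‖toV j‖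
        ≤ μ j * Real.exp (dotZ β j + l1Norm j) * Real.exp (l1Norm j) := by
          have := hμ j
          gcongr
          linarith [Real.add_one_le_exp (l1Norm j)]
      _ = μ j * Real.exp (dotZ β j) * Real.exp (2 * l1Norm j) := by
          rw [two_mul, Real.exp_add, Real.exp_add]; ring
  exact hasFDerivAt_tsum_of_isPreconnected (summable_mul_exp_mul_exp_l1Norm hμ hs β 2)
    Metric.isOpen_ball (convex_ball β 1).isPreconnected (fun j x _ => hderiv j x) hbound
    (Metric.mem_ball_self one_pos) (hs β) (Metric.mem_ball_self one_pos)

lemma differentiable_Pgen (hμ : ∀ j, 0 ≤ μ j)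
    (hs : ∀ β, Summable fun j => μ j * Real.exp (dotZ β j)) :
    Differentiable ℝ (Pgen μ) :=
  fun β => (hasFDerivAt_Pgen hμ hs β).differentiableAt

lemma fderiv_Pgen_zero_single (hμ : ∀ j, 0 ≤ μ j)
    (hs : ∀ β, Summable fun j => μ j * Real.exp (dotZ β j))
    (i : Fin d) :
    fderiv ℝ (Pgen μ) 0 (EuclideanSpace.single i 1) = ∑' j, (j i : ℝ) * μ j := by
  have hsum : Summable fun j => (μ j * Real.exp (dotZ 0 j)) • innerSL ℝ (toV j) :=
    .of_norm_bounded (summable_mul_exp_mul_exp_l1Norm hμ hs 0 1) fun j => by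
      rw [norm_smul, innerSL_apply_norm,
        Real.norm_of_nonneg (mul_nonneg (hμ j) (Real.exp_nonneg _)), one_mul]
      have := hμ j
      gcongr
      linarith [norm_toV_le_l1Norm j, Real.add_one_le_exp (l1Norm j)]
  rw [(hasFDerivAt_Pgen hμ hs 0).fderiv,
    ← ContinuousLinearMap.apply_apply (𝕜 := ℝ) (EuclideanSpace.single i (1 : ℝ)),
    ContinuousLinearMap.map_tsum _ hsum]
  refine tsum_congr fun j => ?_
  rw [ContinuousLinearMap.apply_apply, smul_apply, innerSL_apply_apply,
    real_inner_comm, ← dotZ_eq_inner, dotZ_single]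
  simp [dotZ, mul_comm]

lemma A1.fderiv_Pgen_zero_ne_zero (hA1 : A1 μ) :
    fderiv ℝ (Pgen μ) 0 ≠ 0 := by
  obtain ⟨hμ, -, hfin, i, hi⟩ := hA1
  intro h
  apply hi
  rw [← fderiv_Pgen_zero_single hμ.1 hfin.summable i, h]
  rfl

end JumpGeneratingFunction

section InnerProductSpace

variable {E : Type*} [NormedAddCommGroup E] [InnerProductSpace ℝ E]

lemma ConvexOn.le_sub_of_hasFDerivAt {f : E → ℝ} {L : E →L[ℝ] ℝ} {α : E}
    (hf : ConvexOn ℝ Set.univ f) (hL : HasFDerivAt f L α) (β : E) : L (β - α) ≤ f β - f α := by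
  have hg : HasDerivAt (f ∘ (AffineMap.lineMap α β : ℝ →ᵃ[ℝ] E)) (L (β - α)) 0 :=
    hL.comp_hasDerivAt_of_eq (0 : ℝ) AffineMap.hasDerivAt_lineMap (by simp)
  simpa [slope] using (hf.comp_affineMap (AffineMap.lineMap α β)).le_slope_of_hasDerivAt
    trivial trivial one_pos hg

lemma inner_nonpos_of_hasFDerivAt_apply_neg {f : E → ℝ} {L : E →L[ℝ] ℝ} {α w y : E}
    (hL : HasFDerivAt f L α) (hmax : ∀ β, f β ≤ f α → ⟪β, w⟫ ≤ ⟪α, w⟫) (hy : L y < 0) :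
    ⟪y, w⟫ ≤ 0 := by
  by_contra! hyw
  have hmin : IsLocalMinOn f (segment ℝ α (α + y)) α := by
    refine Filter.eventually_of_mem self_mem_nhdsWithin fun z hz => ?_
    rw [segment_eq_image'] at hz
    obtain ⟨t, ⟨ht0, -⟩, rfl⟩ := hz
    by_contra! hlt
    have hle := hmax _ hlt.le
    simp only [add_sub_cancel_left, inner_add_left, real_inner_smul_left] at hle hlt
    obtain rfl : t = 0 := le_antisymm (by nlinarith) ht0
    simp at hlt
  exact hy.not_ge (hmin.hasFDerivWithinAt_nonneg hL.hasFDerivWithinAt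
    (mem_posTangentConeAt_of_segment_subset subset_rfl))

lemma eq_inv_norm_smul_of_inner_nonpos {n w : E} (hn : n ≠ 0) (hw : ‖w‖ = 1)
    (h : ∀ y, ⟪n, y⟫ < 0 → ⟪w, y⟫ ≤ 0) : w = ‖n‖⁻¹ • n := by
  have hn2 : 0 < ‖n‖ ^ 2 := by positivity
  set p := ⟪n, w⟫ with hp_def
  have hp : 0 ≤ p := by
    have := h (-n) (by rw [inner_neg_right, real_inner_self_eq_norm_sq]; linarith)
    rw [inner_neg_right, real_inner_comm] at this
    linarith
  -- test `h` on `‖n‖² w - (p + t) n`, which lies in the half-space for every `t > 0`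
  have hsq : ∀ t > 0, ‖n‖ ^ 2 - p ^ 2 ≤ t * p := fun t ht => by
    have := h (‖n‖ ^ 2 • w - (p + t) • n) (by
      rw [inner_sub_right, real_inner_smul_right, real_inner_smul_right,
        real_inner_self_eq_norm_sq]
      nlinarith)
    rw [inner_sub_right, real_inner_smul_right, real_inner_smul_right,
      real_inner_self_eq_norm_sq, hw, real_inner_comm, ← hp_def] at this
    nlinarith
  have hle : ‖n‖ ^ 2 ≤ p ^ 2 := by
    by_contra! hlt
    have := hsq ((‖n‖ ^ 2 - p ^ 2) / (2 * (p + 1))) (by apply div_pos <;> linarith)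
    rw [div_mul_eq_mul_div, le_div_iff₀ (by linarith)] at this
    nlinarith
  have hpn : p = ‖n‖ * ‖w‖ := by
    have := real_inner_le_norm n w
    rw [hw, mul_one] at this ⊢
    nlinarith [norm_nonneg n]
  have hnw := inner_eq_norm_mul_iff_real.1 hpn
  rw [hw, one_smul] at hnw
  rw [eq_inv_smul_iff₀ (norm_ne_zero_iff.2 hn)]
  exact hnw.symm

/-- The support function `v ↦ ⟪a v, v⟫` of a set of radius `R` is `R`-Lipschitz, so the gap
attains its (positive) minimum on `K`. -/
lemma exists_pos_le_inner_sub {D K : Set E} {R : ℝ} {a : E → E} {α : E}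
    (hR : ∀ β ∈ D, ‖β‖ ≤ R) (hK : IsCompact K)
    (ha : ∀ v ∈ K, a v ∈ D ∧ ∀ β ∈ D, ⟪β, v⟫ ≤ ⟪a v, v⟫) (hα : α ∈ D)
    (hne : ∀ v ∈ K, ⟪α, v⟫ ≠ ⟪a v, v⟫) :
    ∃ δ > 0, ∀ v ∈ K, δ ≤ ⟪a v, v⟫ - ⟪α, v⟫ := by
  rcases K.eq_empty_or_nonempty with rfl | hKne
  · exact ⟨1, one_pos, by simp⟩
  have hR0 : 0 ≤ R := (norm_nonneg α).trans (hR α hα)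
  have hdiff : ∀ v ∈ K, ∀ w ∈ K, ⟪a v, v⟫ - ⟪a w, w⟫ ≤ R * dist v w := fun v hv w hw =>
    calc ⟪a v, v⟫ - ⟪a w, w⟫ ≤ ⟪a v, v - w⟫ := by
          rw [inner_sub_right]; linarith [(ha w hw).2 _ (ha v hv).1]
      _ ≤ ‖a v‖ * ‖v - w‖ := real_inner_le_norm _ _
      _ ≤ R * dist v w := by rw [dist_eq_norm]; gcongr; exact hR _ (ha v hv).1
  have hlip : LipschitzOnWith (Real.toNNReal R) (fun v => ⟪a v, v⟫) K :=
    .of_dist_le_mul fun v hv w hw => by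
      have hwv := hdiff w hw v hv
      rw [dist_comm] at hwv
      rw [Real.coe_toNNReal R hR0, Real.dist_eq, abs_le]
      constructor <;> linarith [hdiff v hv w hw]
  obtain ⟨v₀, hv₀, hmin⟩ := hK.exists_isMinOn hKne
    (hlip.continuousOn.sub (continuous_const.inner continuous_id).continuousOn)
  refine ⟨_, lt_of_le_of_ne (sub_nonneg.2 ((ha v₀ hv₀).2 α hα)) ?_, isMinOn_iff.1 hmin⟩
  exact (sub_ne_zero.2 (hne v₀ hv₀).symm).symm

end InnerProductSpace

section MaximizingDirection

variable {d : ℕ} {μ : Zd d → ℝ}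

lemma exists_norm_le_of_forall_inner_le {D : Set (V d)}
    (h : ∀ v : V d, ‖v‖ = 1 → ∃ c, ∀ β ∈ D, ⟪β, v⟫ ≤ c) : ∃ R, ∀ β ∈ D, ‖β‖ ≤ R := by
  choose c hc using fun i : Fin d => h (EuclideanSpace.single i 1) (by simp)
  choose c' hc' using fun i : Fin d => h (EuclideanSpace.single i (-1)) (by simp)
  refine ⟨∑ i, (|c i| + |c' i|), fun β hβ => (norm_le_sum_abs β).trans
    (Finset.sum_le_sum fun i _ => ?_)⟩
  have h1 := hc i β hβ
  have h2 := hc' i β hβ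
  simp only [EuclideanSpace.inner_single_right, conj_trivial, one_mul, neg_mul] at h1 h2
  rw [abs_le]
  constructor <;> linarith [le_abs_self (c i), le_abs_self (c' i), abs_nonneg (c i),
    abs_nonneg (c' i)]

lemma A1.Pgen_eq_one_of_isMaxOn' (hA1 : A1 μ) {u α : V d} (hu : u ≠ 0)
    (hα : IsMaxOn' μ u α) : Pgen μ α = 1 := by
  refine le_antisymm hα.1 (not_lt.1 fun hlt => ?_)
  have hcont := (differentiable_Pgen hA1.1.1 hA1.2.2.1.summable).continuous
  have hpath : Tendsto (fun t : ℝ => α + t • u) (𝓝[>] 0) (𝓝 α) :=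
    ((continuous_const.add (continuous_id.smul continuous_const)).tendsto' 0 α
      (by simp)).mono_left nhdsWithin_le_nhds
  obtain ⟨t, hPt, ht⟩ :=
    ((hpath.eventually ((hcont.tendsto α).eventually (gt_mem_nhds hlt))).and
      self_mem_nhdsWithin).exists
  have hle := hα.2 _ hPt.le
  rw [inner_add_left, real_inner_smul_left] at hle
  nlinarith [real_inner_self_pos.2 hu]

/-- `∂D = {P = 1}` is smooth: its normal at `α` is `∇P(α) ≠ 0`. -/
lemma A1.eq_of_isMaxOn' (hA1 : A1 μ) {u v α : V d} (hu : ‖u‖ = 1) (hv : ‖v‖ = 1)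
    (hαu : IsMaxOn' μ u α) (hαv : IsMaxOn' μ v α) : u = v := by
  have hs := hA1.2.2.1.summable
  have hP : Pgen μ α = 1 := hA1.Pgen_eq_one_of_isMaxOn' (by rintro rfl; simp at hu) hαu
  set L := fderiv ℝ (Pgen μ) α
  have hL : HasFDerivAt (Pgen μ) L α := (differentiable_Pgen hA1.1.1 hs α).hasFDerivAt
  -- if `L = 0`, convexity would make `α`, and hence also `0`, a global minimum of `P`
  have hL0 : L ≠ 0 := fun h => hA1.fderiv_Pgen_zero_ne_zero <| by
    have hmin : IsMinOn (Pgen μ) Set.univ 0 := fun β _ => by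
      have := (convexOn_Pgen hA1.1.1 hs).le_sub_of_hasFDerivAt hL β
      rw [h] at this
      show Pgen μ 0 ≤ Pgen μ β
      rw [hA1.1.Pgen_zero, ← hP]
      exact sub_nonneg.1 this
    exact (hmin.isLocalMin Filter.univ_mem).hasFDerivAt_eq_zero
      (differentiable_Pgen hA1.1.1 hs 0).hasFDerivAt
  set n := (InnerProductSpace.toDual ℝ (V d)).symm L
  have hLn : ∀ y, L y = ⟪n, y⟫ := fun y => InnerProductSpace.toDual_symm_apply.symm
  have hn : n ≠ 0 := fun h => hL0 (ContinuousLinearMap.ext fun y => by simp [hLn, h])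
  have hnormal : ∀ w, IsMaxOn' μ w α → ∀ y, ⟪n, y⟫ < 0 → ⟪w, y⟫ ≤ 0 := fun w hw y hy => by
    rw [real_inner_comm]
    exact inner_nonpos_of_hasFDerivAt_apply_neg hL (fun β hβ => hw.2 β (hβ.trans hP.le))
      (hLn y ▸ hy)
  rw [eq_inv_norm_smul_of_inner_nonpos hn hu (hnormal u hαu),
    eq_inv_norm_smul_of_inner_nonpos hn hv (hnormal v hαv)]

end MaximizingDirection

section ExitSeries

variable {d : ℕ} {μ : Zd d → ℝ} {C : Set (V d)}

/-- The unit directions outside `C` form a compact set avoiding `u`, so uniqueness of maximizing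
directions becomes a uniform gap there. -/
lemma A1.exists_pos_mul_l1Norm_le (hA1 : A1 μ) (hC : IsOpenCone C) {αfun : V d → V d}
    (hα : ∀ v : V d, ‖v‖ = 1 → IsMaxOn' μ v (αfun v)) {u : V d} (hu : ‖u‖ = 1) (huC : u ∈ C) :
    ∃ δ > 0, ∀ m : Zd d, toV m ∉ C →
      ∃ β ∈ Dset μ, δ * l1Norm m ≤ dotZ β m - dotZ (αfun u) m := by
  obtain ⟨R, hR⟩ := exists_norm_le_of_forall_inner_le fun v hv => ⟨_, (hα v hv).2⟩
  set K := Metric.sphere (0 : V d) 1 ∩ Cᶜ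
  have hK1 : ∀ v ∈ K, ‖v‖ = 1 := fun v hv => mem_sphere_zero_iff_norm.1 hv.1
  obtain ⟨δ, hδ, hgap⟩ := exists_pos_le_inner_sub hR
    ((isCompact_sphere 0 1).inter_right hC.1.isClosed_compl) (fun v hv => hα v (hK1 v hv))
    (hα u hu).1 fun v hv heq => hv.2 <| hA1.eq_of_isMaxOn' hu (hK1 v hv) (hα u hu)
      ⟨(hα u hu).1, fun β hβ => heq ▸ (hα v (hK1 v hv)).2 β hβ⟩ ▸ huC
  have hd : 0 < (d : ℝ) := Nat.cast_pos.2 <| Nat.pos_of_ne_zero fun h => by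
    subst h
    simp [Subsingleton.elim u 0] at hu
  refine ⟨δ / d, div_pos hδ hd, fun m hm => ?_⟩
  obtain ⟨β, hβ, hle⟩ : ∃ β ∈ Dset μ, δ * ‖toV m‖ ≤ dotZ β m - dotZ (αfun u) m := by
    by_cases h0 : toV m = 0
    · exact ⟨αfun u, (hα u hu).1, by simp [h0]⟩
    have hm0 : 0 < ‖toV m‖ := norm_pos_iff.2 h0
    set v := ‖toV m‖⁻¹ • toV m
    have hvK : v ∈ K := ⟨by simp [v, norm_smul, hm0.ne'], fun hvC => hm <| by
      simpa [v, smul_smul, hm0.ne'] using hC.2 v hvC _ hm0⟩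
    refine ⟨αfun v, (hα v (hK1 v hvK)).1, ?_⟩
    have := hgap v hvK
    rw [real_inner_smul_right, real_inner_smul_right, ← mul_sub, le_inv_mul_iff₀ hm0,
      mul_comm] at this
    simpa only [dotZ_eq_inner] using this
  refine ⟨β, hβ, le_trans ?_ hle⟩
  calc δ / d * l1Norm m ≤ δ / d * (d * ‖toV m‖) := by
        gcongr
        exact l1Norm_le_mul_norm_toV m
    _ = δ * ‖toV m‖ := by field_simp

lemma summable_exitTotal_mul_exp {k : Zd d} (hμ : IsProb μ) (hfin : FiniteNearD μ)
    {α γ : V d} {δ R : ℝ} (hR : ∀ β ∈ Dset μ, ‖β‖ ≤ R)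
    (hgap : ∀ m : Zd d, toV m ∉ C → ∃ β ∈ Dset μ, δ * l1Norm m ≤ dotZ β m - dotZ α m)
    (hδ : 0 < δ) (hγ : ∀ i, |γ i - α i| ≤ δ / 2) :
    Summable fun m => if toV m ∉ C then exitTotal μ C k m * Real.exp (dotZ γ m) else 0 := by
  refine .of_nonneg_of_le (fun m => ?_) (fun m => ?_)
    ((summable_exp_neg_mul_l1Norm (half_pos hδ)).mul_left (Real.exp (R * ‖toV k‖)))
  · split_ifs
    · exact le_rfl
    · exact mul_nonneg (exitTotal_nonneg hμ.1 m) (Real.exp_nonneg _)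
  split_ifs with hm
  · positivity
  · obtain ⟨β, hβ, hle⟩ := hgap m hm
    have hγβ : dotZ γ m - dotZ β m ≤ -(δ / 2) * l1Norm m := by
      have := dotZ_le_mul_l1Norm (y := γ - α) hγ m
      simp only [dotZ_eq_inner, inner_sub_left] at this hle ⊢
      linarith
    have hk : dotZ β k ≤ R * ‖toV k‖ := by
      rw [dotZ_eq_inner]
      exact (real_inner_le_norm β (toV k)).trans (by gcongr; exact hR β hβ)
    calc exitTotal μ C k m * Real.exp (dotZ γ m)
        = exitTotal μ C k m * Real.exp (dotZ β m) * Real.exp (dotZ γ m - dotZ β m) := by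
          rw [mul_assoc, ← Real.exp_add, add_sub_cancel]
      _ ≤ Real.exp (R * ‖toV k‖) * Real.exp (-(δ / 2) * l1Norm m) := by
          gcongr
          exact (exitTotal_mul_exp_le hμ (hfin.summable β) hβ m).trans (Real.exp_le_exp.2 hk)

end ExitSeries

theorem statement8_general {d : ℕ} (μ : Zd d → ℝ) (C : Set (V d)) (hA1 : A1 μ)
    (hC : IsOpenCone C) (αfun : V d → V d)
    (hα : ∀ u : V d, ‖u‖ = 1 → IsMaxOn' μ u (αfun u))
    (u : V d) (hu : ‖u‖ = 1) (huC : u ∈ C) (k : Zd d) :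
    ∃ Vu : Set (Fin d → ℝ), IsOpen Vu ∧ (fun i => Real.exp (αfun u i)) ∈ Vu ∧
      ∀ x : Fin d → ℂ, (fun i => ‖x i‖) ∈ Vu →
        Summable (fun m : Zd d =>
          if toV m ∉ C then
            exitTotal μ C k m * rpowZ (fun i => ‖x i‖) m
          else 0) := by
  obtain ⟨R, hR⟩ := exists_norm_le_of_forall_inner_le fun v hv => ⟨_, (hα v hv).2⟩
  obtain ⟨δ, hδ, hgap⟩ := hA1.exists_pos_mul_l1Norm_le hC hα hu huC
  refine ⟨Set.univ.pi fun i => Set.Ioo (Real.exp (αfun u i - δ / 2)) (Real.exp (αfun u i + δ / 2)),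
    isOpen_set_pi Set.finite_univ fun _ _ => isOpen_Ioo,
    fun i _ => ⟨Real.exp_lt_exp.2 (by linarith), Real.exp_lt_exp.2 (by linarith)⟩,
    fun x hx => ?_⟩
  have hpos : ∀ i, 0 < ‖x i‖ := fun i => (Real.exp_pos _).trans (hx i trivial).1
  have hγ : ∀ i, |Real.log ‖x i‖ - αfun u i| ≤ δ / 2 := fun i => by
    obtain ⟨h1, h2⟩ := hx i trivial
    rw [abs_le]
    constructor
    · linarith [(Real.lt_log_iff_exp_lt (hpos i)).2 h1]
    · linarith [(Real.log_lt_iff_lt_exp (hpos i)).2 h2]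
  simpa only [rpowZ_eq_exp_dotZ hpos] using
    summable_exitTotal_mul_exp (k := k) hA1.1 hA1.2.2.1 hR hgap hδ hγ

/-- under (A1), (A2), for u ∈ S^{d-1} ∩ C and k ∈ ℤ^d ∩ C the series
F_k converges absolutely on a multicircular neighborhood of r(u) = (e^{α₁(u)},…,e^{α_d(u)}). -/
theorem statement8 {d : ℕ} (μ : Zd d → ℝ) (C : Set (V d)) (hA1 : A1 μ)
    (hC : IsOpenCone C) (hA2 : A2 μ C) (αfun : V d → V d)
    (hα : ∀ u : V d, ‖u‖ = 1 → IsMaxOn' μ u (αfun u))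
    (u : V d) (hu : ‖u‖ = 1) (huC : u ∈ C) (k : Zd d) (hk : toV k ∈ C) :
    ∃ Vu : Set (Fin d → ℝ), IsOpen Vu ∧ (fun i => Real.exp (αfun u i)) ∈ Vu ∧
      ∀ x : Fin d → ℂ, (fun i => ‖x i‖) ∈ Vu →
        Summable (fun m : Zd d =>
          if toV m ∉ C then
            exitTotal μ C k m * rpowZ (fun i => ‖x i‖) m
          else 0) :=
  statement8_general μ C hA1 hC αfun hα u hu huC k
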